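/- Evaluation commutes with reduction: if R_A →* S_A (as memories), M →* N, and (R_A, M) ⇓ (T_A, i), then there exists a memory U_A such that T_A →* U_A and (S_A, N) ⇓ (U_A, i). -/

import Mathlib

variable {Loc Ch : Type}

/-- FMC terms: variable, push `[N]a.M`, pop `a<x>.M` (de Bruijn binder),
choice `i`, case `M ; i -> N`, and loop `M^i`. -/
inductive Tm (Loc Ch : Type) : Type where
  | var : ℕ → Tm Loc Ch
  | push : Tm Loc Ch → Loc → Tm Loc Ch → Tm Loc Ch
  | pop : Loc → Tm Loc Ch → Tm Loc Ch
  | choice : Ch → Tm Loc Ch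
  | caseOf : Tm Loc Ch → Ch → Tm Loc Ch → Tm Loc Ch
  | loop : Tm Loc Ch → Ch → Tm Loc Ch

namespace Tm

/-- Shift the free de Bruijn indices `≥ d` up by one. -/
def lift : Tm Loc Ch → ℕ → Tm Loc Ch
  | var n, d => if n < d then var n else var (n + 1)
  | push N a M, d => push (N.lift d) a (M.lift d)
  | pop a M, d => pop a (M.lift (d + 1))
  | choice i, _ => choice i
  | caseOf M i N, d => caseOf (M.lift d) i (N.lift d)
  | loop M i, d => loop (M.lift d) i

/-- Capture-avoiding substitution `{N/k}M` for the de Bruijn index `k`. -/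
def subst : Tm Loc Ch → ℕ → Tm Loc Ch → Tm Loc Ch
  | var n, k, N => if n = k then N else if n < k then var n else var (n - 1)
  | push P a M, k, N => push (P.subst k N) a (M.subst k N)
  | pop a M, k, N => pop a (M.subst (k + 1) (N.lift 0))
  | choice i, _, _ => choice i
  | caseOf M i P, k, N => caseOf (M.subst k N) i (P.subst k N)
  | loop M i, k, N => loop (M.subst k N) i

end Tm

/-- Reduction: the closure under arbitrary contexts of the rules
beta, passage, select, reject, prefix(pop), prefix(push), associate, unroll. -/
inductive Step : Tm Loc Ch → Tm Loc Ch → Prop where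
  | beta (N : Tm Loc Ch) (a : Loc) (M : Tm Loc Ch) :
      Step (.push N a (.pop a M)) (M.subst 0 N)
  | passage (N : Tm Loc Ch) (a b : Loc) (M : Tm Loc Ch) (h : a ≠ b) :
      Step (.push N b (.pop a M)) (.pop a (.push (N.lift 0) b M))
  | select (i : Ch) (M : Tm Loc Ch) :
      Step (.caseOf (.choice i) i M) M
  | reject (i j : Ch) (M : Tm Loc Ch) (h : i ≠ j) :
      Step (.caseOf (.choice i) j M) (.choice i)
  | prefixPop (a : Loc) (N : Tm Loc Ch) (i : Ch) (M : Tm Loc Ch) :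
      Step (.caseOf (.pop a N) i M) (.pop a (.caseOf N i (M.lift 0)))
  | prefixPush (P : Tm Loc Ch) (a : Loc) (N : Tm Loc Ch) (i : Ch) (M : Tm Loc Ch) :
      Step (.caseOf (.push P a N) i M) (.push P a (.caseOf N i M))
  | assoc (P : Tm Loc Ch) (i : Ch) (N M : Tm Loc Ch) :
      Step (.caseOf (.caseOf P i N) i M) (.caseOf P i (.caseOf N i M))
  | unroll (M : Tm Loc Ch) (i : Ch) :
      Step (.loop M i) (.caseOf M i (.loop M i))
  | push_left (N N' : Tm Loc Ch) (a : Loc) (M : Tm Loc Ch) :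
      Step N N' → Step (.push N a M) (.push N' a M)
  | push_right (N : Tm Loc Ch) (a : Loc) (M M' : Tm Loc Ch) :
      Step M M' → Step (.push N a M) (.push N a M')
  | pop_body (a : Loc) (M M' : Tm Loc Ch) :
      Step M M' → Step (.pop a M) (.pop a M')
  | case_left (M M' : Tm Loc Ch) (i : Ch) (N : Tm Loc Ch) :
      Step M M' → Step (.caseOf M i N) (.caseOf M' i N)
  | case_right (M : Tm Loc Ch) (i : Ch) (N N' : Tm Loc Ch) :
      Step N N' → Step (.caseOf M i N) (.caseOf M i N')
  | loop_body (M M' : Tm Loc Ch) (i : Ch) :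
      Step M M' → Step (.loop M i) (.loop M' i)

variable [DecidableEq Loc]

/-- A memory: a family of stacks of terms indexed by the locations
(stacks are lists with the head as top). -/
def Mem (Loc Ch : Type) := Loc → List (Tm Loc Ch)

/-- `S.push a N` pushes `N` onto the stack at location `a`. -/
def Mem.push (S : Mem Loc Ch) (a : Loc) (N : Tm Loc Ch) : Mem Loc Ch :=
  Function.update S a (N :: S a)

/-- The empty memory. -/
def Mem.empty : Mem Loc Ch := fun _ => []

/-- Big-step evaluation `(S, M) ⇓ (T, i)`. -/
inductive Eval : Mem Loc Ch → Tm Loc Ch → Mem Loc Ch → Ch → Prop where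
  | choice (S : Mem Loc Ch) (i : Ch) : Eval S (.choice i) S i
  | push (S : Mem Loc Ch) (N : Tm Loc Ch) (a : Loc) (M : Tm Loc Ch) (T : Mem Loc Ch) (i : Ch) :
      Eval (S.push a N) M T i → Eval S (.push N a M) T i
  | pop (S : Mem Loc Ch) (a : Loc) (N M : Tm Loc Ch) (T : Mem Loc Ch) (i : Ch) :
      Eval S (M.subst 0 N) T i → Eval (S.push a N) (.pop a M) T i
  | case_eq (R S T : Mem Loc Ch) (M N : Tm Loc Ch) (i j : Ch) :
      Eval R M S i → Eval S N T j → Eval R (.caseOf M i N) T j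
  | case_ne (R T : Mem Loc Ch) (M N : Tm Loc Ch) (i j : Ch) (h : i ≠ j) :
      Eval R M T i → Eval R (.caseOf M j N) T i
  | loop_eq (R S T : Mem Loc Ch) (M : Tm Loc Ch) (i j : Ch) :
      Eval R M S i → Eval S (.loop M i) T j → Eval R (.loop M i) T j
  | loop_ne (R T : Mem Loc Ch) (M : Tm Loc Ch) (i j : Ch) (h : i ≠ j) :
      Eval R M T i → Eval R (.loop M j) T i

/-- Reduction extended to memories: reduce one term in one stack. -/
inductive MemStep : Mem Loc Ch → Mem Loc Ch → Prop where
  | head (S : Mem Loc Ch) (a : Loc) (M N : Tm Loc Ch) :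
      Step M N → MemStep (S.push a M) (S.push a N)
  | tail (S T : Mem Loc Ch) (a : Loc) (M : Tm Loc Ch) :
      MemStep S T → MemStep (S.push a M) (T.push a M)

/-! An evaluation derivation is transported along one reduction step at a time. A redex rule only
rearranges the derivation, without enlarging it or changing its final memory. A step inside a
subterm goes to a premise by induction; the premises after it then start from a reduced memory, so
term steps and memory steps have to be handled together. A memory step on a stack entry that is
later popped becomes several term steps of the body it is substituted into. -/

open Relation

section

variable {L C : Type}

namespace Tm

theorem lift_lift_of_le (M : Tm L C) {d e : ℕ} (h : d ≤ e) :
    (M.lift d).lift (e + 1) = (M.lift e).lift d := by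
  induction M generalizing d e with
  | var n => grind [lift]
  | pop a M ih => simp only [lift, ih (Nat.succ_le_succ h)]
  | _ => simp_all [lift]

theorem subst_lift (M : Tm L C) (k : ℕ) (N : Tm L C) : (M.lift k).subst k N = M := by
  induction M generalizing k N with
  | var n => grind [lift, subst]
  | _ => simp_all [lift, subst]

theorem lift_subst_of_le (M : Tm L C) {k d : ℕ} (N : Tm L C) (h : k ≤ d) :
    (M.subst k N).lift d = (M.lift (d + 1)).subst k (N.lift d) := by
  induction M generalizing k d N with
  | var n => grind [lift, subst]
  | pop a M ih =>
    simp only [subst, lift, ih _ (Nat.succ_le_succ h), lift_lift_of_le N (Nat.zero_le d)]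
  | _ => simp_all [lift, subst]

theorem lift_subst_of_ge (M : Tm L C) {k d : ℕ} (N : Tm L C) (h : d ≤ k) :
    (M.subst k N).lift d = (M.lift d).subst (k + 1) (N.lift d) := by
  induction M generalizing k d N with
  | var n => grind [lift, subst]
  | pop a M ih =>
    simp only [subst, lift, ih _ (Nat.succ_le_succ h), lift_lift_of_le N (Nat.zero_le d)]
  | _ => simp_all [lift, subst]

theorem subst_subst_of_le (M : Tm L C) {j k : ℕ} (N P : Tm L C) (h : j ≤ k) :
    (M.subst j N).subst k P = (M.subst (k + 1) (P.lift j)).subst j (N.subst k P) := by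
  induction M generalizing j k N P with
  | var n => grind [subst, subst_lift]
  | pop a M ih =>
    simp only [subst, ih _ _ (Nat.succ_le_succ h), lift_lift_of_le P (Nat.zero_le j),
      lift_subst_of_ge N P (Nat.zero_le k)]
  | _ => simp_all [subst]

end Tm

namespace Step

theorem lift {M M' : Tm L C} (h : Step M M') (d : ℕ) : Step (M.lift d) (M'.lift d) := by
  induction h generalizing d with
  | beta N a M => rw [Tm.lift_subst_of_le M N (Nat.zero_le d)]; exact .beta _ _ _
  | passage N a b M hab =>
    simp only [Tm.lift]; rw [Tm.lift_lift_of_le N (Nat.zero_le d)]; exact .passage _ _ _ _ hab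
  | select i M => exact .select _ _
  | reject i j M hij => exact .reject _ _ _ hij
  | prefixPop a N i M =>
    simp only [Tm.lift]; rw [Tm.lift_lift_of_le M (Nat.zero_le d)]; exact .prefixPop _ _ _ _
  | prefixPush P a N i M => exact .prefixPush _ _ _ _ _
  | assoc P i N M => exact .assoc _ _ _ _
  | unroll M i => exact .unroll _ _
  | push_left N N' a M _ ih => exact .push_left _ _ _ _ (ih d)
  | push_right N a M M' _ ih => exact .push_right _ _ _ _ (ih d)
  | pop_body a M M' _ ih => exact .pop_body _ _ _ (ih (d + 1))
  | case_left M M' i N _ ih => exact .case_left _ _ _ _ (ih d)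
  | case_right M i N N' _ ih => exact .case_right _ _ _ _ (ih d)
  | loop_body M M' i _ ih => exact .loop_body _ _ _ (ih d)

theorem subst {M M' : Tm L C} (h : Step M M') (k : ℕ) (P : Tm L C) :
    Step (M.subst k P) (M'.subst k P) := by
  induction h generalizing k P with
  | beta N a M => rw [Tm.subst_subst_of_le M N P (Nat.zero_le k)]; exact .beta _ _ _
  | passage N a b M hab =>
    simp only [Tm.subst]; rw [← Tm.lift_subst_of_ge N P (Nat.zero_le k)]
    exact .passage _ _ _ _ hab
  | select i M => exact .select _ _
  | reject i j M hij => exact .reject _ _ _ hij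
  | prefixPop a N i M =>
    simp only [Tm.subst]; rw [← Tm.lift_subst_of_ge M P (Nat.zero_le k)]
    exact .prefixPop _ _ _ _
  | prefixPush Q a N i M => exact .prefixPush _ _ _ _ _
  | assoc Q i N M => exact .assoc _ _ _ _
  | unroll M i => exact .unroll _ _
  | push_left N N' a M _ ih => exact .push_left _ _ _ _ (ih k P)
  | push_right N a M M' _ ih => exact .push_right _ _ _ _ (ih k P)
  | pop_body a M M' _ ih => exact .pop_body _ _ _ (ih (k + 1) (P.lift 0))
  | case_left M M' i N _ ih => exact .case_left _ _ _ _ (ih k P)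
  | case_right M i N N' _ ih => exact .case_right _ _ _ _ (ih k P)
  | loop_body M M' i _ ih => exact .loop_body _ _ _ (ih k P)

theorem subst_arg (M : Tm L C) {N N' : Tm L C} (h : Step N N') (k : ℕ) :
    ReflTransGen Step (M.subst k N) (M.subst k N') := by
  induction M generalizing k N N' with
  | var n =>
    simp only [Tm.subst]
    split_ifs
    exacts [.single h, .refl, .refl]
  | push P a M ihP ihM =>
    exact ((ihP h k).lift (Tm.push · a _) fun _ _ => Step.push_left _ _ _ _).trans
      ((ihM h k).lift (Tm.push _ a ·) fun _ _ => Step.push_right _ _ _ _)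
  | pop a M ih => exact (ih (h.lift 0) (k + 1)).lift (Tm.pop a ·) fun _ _ => Step.pop_body _ _ _
  | choice i => exact .refl
  | caseOf M i Q ihM ihQ =>
    exact ((ihM h k).lift (Tm.caseOf · i _) fun _ _ => Step.case_left _ _ _ _).trans
      ((ihQ h k).lift (Tm.caseOf _ i ·) fun _ _ => Step.case_right _ _ _ _)
  | loop M i ih => exact (ih h k).lift (Tm.loop · i) fun _ _ => Step.loop_body _ _ _

end Step

theorem Mem.ext {S S' : Mem L C} (h : ∀ c, S c = S' c) : S = S' := funext h

end

namespace Mem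

theorem push_apply (S : Mem Loc Ch) (a : Loc) (N : Tm Loc Ch) (c : Loc) :
    S.push a N c = if c = a then N :: S a else S c :=
  Function.update_apply _ _ _ _

theorem push_inj {S S' : Mem Loc Ch} {a : Loc} {N N' : Tm Loc Ch} :
    S.push a N = S'.push a N' ↔ S = S' ∧ N = N' := by
  refine ⟨fun h => ?_, fun ⟨hS, hN⟩ => hS ▸ hN ▸ rfl⟩
  have ha := congrFun h a
  simp only [push_apply, if_pos, List.cons_eq_cons] at ha
  refine ⟨ext fun c => ?_, ha.1⟩
  have hc := congrFun h c
  simp only [push_apply] at hc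
  split_ifs at hc with hca
  · exact hca ▸ ha.2
  · exact hc

theorem push_comm (S : Mem Loc Ch) {a b : Loc} (N P : Tm Loc Ch) (h : a ≠ b) :
    (S.push a N).push b P = (S.push b P).push a N :=
  ext fun c => by simp only [push_apply]; split_ifs <;> simp_all

theorem exists_of_push_eq_push {S S' : Mem Loc Ch} {a b : Loc} {N N' : Tm Loc Ch} (hab : a ≠ b)
    (h : S.push a N = S'.push b N') : ∃ S₀ : Mem Loc Ch, S = S₀.push b N' ∧ S' = S₀.push a N := by
  have hS c := congrFun h c
  simp only [push_apply] at hS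
  obtain ⟨S₀, hS₀⟩ : ∃ S₀ : Mem Loc Ch, ∀ c, S₀ c = if c = b then S' b else S c :=
    ⟨fun c => if c = b then S' b else S c, fun _ => rfl⟩
  refine ⟨S₀, ext fun c => ?_, ext fun c => ?_⟩ <;> simp only [push_apply, hS₀] <;> grind

end Mem

theorem MemStep.push_inv {S R' : Mem Loc Ch} {a : Loc} {N : Tm Loc Ch}
    (h : MemStep (S.push a N) R') :
    (∃ N', Step N N' ∧ R' = S.push a N') ∨ ∃ S', MemStep S S' ∧ R' = S'.push a N := by
  generalize hQ : S.push a N = Q at h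
  induction h generalizing S N with
  | head S₀ b M M' hM =>
    by_cases hab : a = b
    · subst hab
      obtain ⟨rfl, rfl⟩ := Mem.push_inj.1 hQ
      exact .inl ⟨M', hM, rfl⟩
    · obtain ⟨X, rfl, rfl⟩ := Mem.exists_of_push_eq_push hab hQ
      exact .inr ⟨X.push b M', .head _ _ _ _ hM, Mem.push_comm _ _ _ hab⟩
  | tail S₀ T₀ b M hS ih =>
    by_cases hab : a = b
    · subst hab
      obtain ⟨rfl, rfl⟩ := Mem.push_inj.1 hQ
      exact .inr ⟨T₀, hS, rfl⟩
    · obtain ⟨X, rfl, rfl⟩ := Mem.exists_of_push_eq_push hab hQ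
      rcases ih rfl with ⟨N', hN, rfl⟩ | ⟨X', hX, rfl⟩
      · exact .inl ⟨N', hN, Mem.push_comm _ _ _ hab⟩
      · exact .inr ⟨X'.push b M, .tail _ _ _ _ hX, Mem.push_comm _ _ _ hab⟩

/-- `(R, M) ⇓ (T, i)` has a derivation with at most `n` non-leaf nodes. The induction is on this
size because in the loop case the hypothesis is applied to a premise that was already rewritten. -/
inductive EvalN : ℕ → Mem Loc Ch → Tm Loc Ch → Mem Loc Ch → Ch → Prop where
  | choice (n : ℕ) (S : Mem Loc Ch) (i : Ch) : EvalN n S (.choice i) S i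
  | push {n : ℕ} {S : Mem Loc Ch} {N : Tm Loc Ch} {a : Loc} {M : Tm Loc Ch} {T : Mem Loc Ch}
      {i : Ch} : EvalN n (S.push a N) M T i → EvalN (n + 1) S (.push N a M) T i
  | pop {n : ℕ} {S : Mem Loc Ch} {a : Loc} {N M : Tm Loc Ch} {T : Mem Loc Ch} {i : Ch} :
      EvalN n S (M.subst 0 N) T i → EvalN (n + 1) (S.push a N) (.pop a M) T i
  | case_eq {n₁ n₂ : ℕ} {R S T : Mem Loc Ch} {M N : Tm Loc Ch} {i j : Ch} :
      EvalN n₁ R M S i → EvalN n₂ S N T j → EvalN (n₁ + n₂ + 1) R (.caseOf M i N) T j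
  | case_ne {n : ℕ} {R T : Mem Loc Ch} {M N : Tm Loc Ch} {i j : Ch} (h : i ≠ j) :
      EvalN n R M T i → EvalN (n + 1) R (.caseOf M j N) T i
  | loop_eq {n₁ n₂ : ℕ} {R S T : Mem Loc Ch} {M : Tm Loc Ch} {i j : Ch} :
      EvalN n₁ R M S i → EvalN n₂ S (.loop M i) T j → EvalN (n₁ + n₂ + 1) R (.loop M i) T j
  | loop_ne {n : ℕ} {R T : Mem Loc Ch} {M : Tm Loc Ch} {i j : Ch} (h : i ≠ j) :
      EvalN n R M T i → EvalN (n + 1) R (.loop M j) T i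

namespace EvalN

variable {n : ℕ} {R S T : Mem Loc Ch} {M N : Tm Loc Ch} {a : Loc} {i j k : Ch}

theorem succ (h : EvalN n R M T i) : EvalN (n + 1) R M T i := by
  induction h with
  | choice => exact .choice _ _ _
  | push _ ih => exact ih.push
  | pop _ ih => exact ih.pop
  | case_eq _ h₂ ih₁ _ => convert ih₁.case_eq h₂ using 1; omega
  | case_ne h _ ih => exact ih.case_ne h
  | loop_eq _ h₂ ih₁ _ => convert ih₁.loop_eq h₂ using 1; omega
  | loop_ne h _ ih => exact ih.loop_ne h

theorem mono {m : ℕ} (h : EvalN n R M T i) (hnm : n ≤ m) : EvalN m R M T i :=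
  Nat.le_induction h (fun _ _ => succ) m hnm

theorem pop_inv {Q : Mem Loc Ch} (h : EvalN n Q (.pop a M) T i) :
    ∃ m S P, n = m + 1 ∧ Q = S.push a P ∧ EvalN m S (M.subst 0 P) T i := by
  cases h with
  | pop h => exact ⟨_, _, _, rfl, rfl, h⟩

theorem beta (h : EvalN n R (.push N a (.pop a M)) T i) : EvalN n R (M.subst 0 N) T i := by
  cases h with
  | push h =>
    obtain ⟨m, S, P, rfl, hS, hbody⟩ := h.pop_inv
    obtain ⟨rfl, rfl⟩ := Mem.push_inj.1 hS
    exact hbody.mono (by omega)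

theorem passage {b : Loc} (hab : a ≠ b) (h : EvalN n R (.push N b (.pop a M)) T i) :
    EvalN n R (.pop a (.push (N.lift 0) b M)) T i := by
  cases h with
  | push h =>
    obtain ⟨m, S, P, rfl, hS, hbody⟩ := h.pop_inv
    obtain ⟨S₀, rfl, rfl⟩ := Mem.exists_of_push_eq_push hab hS.symm
    refine EvalN.pop ?_
    simpa only [Tm.subst, Tm.subst_lift] using hbody.push

theorem select (h : EvalN n R (.caseOf (.choice i) i M) T j) : EvalN n R M T j := by
  cases h with
  | case_eq h₁ h₂ => cases h₁; exact h₂.mono (by omega)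
  | case_ne hne h₁ => cases h₁; exact absurd rfl hne

theorem reject (hij : i ≠ j) (h : EvalN n R (.caseOf (.choice i) j M) T k) :
    EvalN n R (.choice i) T k := by
  cases h with
  | case_eq h₁ _ => cases h₁; exact absurd rfl hij
  | case_ne _ h₁ => cases h₁; exact .choice _ _ _

theorem prefixPop (h : EvalN n R (.caseOf (.pop a M) i N) T j) :
    EvalN n R (.pop a (.caseOf M i (N.lift 0))) T j := by
  cases h with
  | case_eq h₁ h₂ =>
    obtain ⟨m, S, P, rfl, rfl, hbody⟩ := h₁.pop_inv
    exact (EvalN.pop (by simpa only [Tm.subst, Tm.subst_lift] using hbody.case_eq h₂)).mono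
      (by omega)
  | case_ne hne h₁ =>
    obtain ⟨m, S, P, rfl, rfl, hbody⟩ := h₁.pop_inv
    exact EvalN.pop (by simpa only [Tm.subst, Tm.subst_lift] using hbody.case_ne hne)

theorem prefixPush {P : Tm Loc Ch} (h : EvalN n R (.caseOf (.push P a M) i N) T j) :
    EvalN n R (.push P a (.caseOf M i N)) T j := by
  cases h with
  | case_eq h₁ h₂ => cases h₁ with | push h₁ => exact (h₁.case_eq h₂).push.mono (by omega)
  | case_ne hne h₁ => cases h₁ with | push h₁ => exact (h₁.case_ne hne).push

theorem assoc {P : Tm Loc Ch} (h : EvalN n R (.caseOf (.caseOf P i M) i N) T j) :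
    EvalN n R (.caseOf P i (.caseOf M i N)) T j := by
  cases h with
  | case_eq h₁ h₂ =>
    cases h₁ with
    | case_eq hP hM => exact (hP.case_eq (hM.case_eq h₂)).mono (by omega)
    | case_ne hne _ => exact absurd rfl hne
  | case_ne hne h₁ =>
    cases h₁ with
    | case_eq hP hM => exact (hP.case_eq (hM.case_ne hne)).mono (by omega)
    | case_ne hne' hP => exact (hP.case_ne hne').mono (by omega)

theorem unroll (h : EvalN n R (.loop M i) T j) : EvalN n R (.caseOf M i (.loop M i)) T j := by
  cases h with
  | loop_eq h₁ h₂ => exact h₁.case_eq h₂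
  | loop_ne hne h₁ => exact h₁.case_ne hne

end EvalN

theorem eval_iff_exists_evalN {R T : Mem Loc Ch} {M : Tm Loc Ch} {i : Ch} :
    Eval R M T i ↔ ∃ n, EvalN n R M T i := by
  constructor
  · intro h
    induction h with
    | choice S i => exact ⟨0, .choice _ _ _⟩
    | push _ _ _ _ _ _ _ ih => obtain ⟨n, h⟩ := ih; exact ⟨n + 1, h.push⟩
    | pop _ _ _ _ _ _ _ ih => obtain ⟨n, h⟩ := ih; exact ⟨n + 1, h.pop⟩
    | case_eq _ _ _ _ _ _ _ _ _ ih₁ ih₂ =>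
      obtain ⟨n₁, h₁⟩ := ih₁; obtain ⟨n₂, h₂⟩ := ih₂; exact ⟨_, h₁.case_eq h₂⟩
    | case_ne _ _ _ _ _ _ hne _ ih => obtain ⟨n, h⟩ := ih; exact ⟨n + 1, h.case_ne hne⟩
    | loop_eq _ _ _ _ _ _ _ _ ih₁ ih₂ =>
      obtain ⟨n₁, h₁⟩ := ih₁; obtain ⟨n₂, h₂⟩ := ih₂; exact ⟨_, h₁.loop_eq h₂⟩
    | loop_ne _ _ _ _ _ hne _ ih => obtain ⟨n, h⟩ := ih; exact ⟨n + 1, h.loop_ne hne⟩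
  · rintro ⟨n, h⟩
    induction h with
    | choice => exact .choice _ _
    | push _ ih => exact .push _ _ _ _ _ _ ih
    | pop _ ih => exact .pop _ _ _ _ _ _ ih
    | case_eq _ _ ih₁ ih₂ => exact .case_eq _ _ _ _ _ _ _ ih₁ ih₂
    | case_ne hne _ ih => exact .case_ne _ _ _ _ _ _ hne ih
    | loop_eq _ _ ih₁ ih₂ => exact .loop_eq _ _ _ _ _ _ ih₁ ih₂
    | loop_ne hne _ ih => exact .loop_ne _ _ _ _ _ hne ih

def TermStepCommutes (Loc Ch : Type) [DecidableEq Loc] (n : ℕ) : Prop :=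
  ∀ ⦃R : Mem Loc Ch⦄ ⦃M : Tm Loc Ch⦄ ⦃T : Mem Loc Ch⦄ ⦃i : Ch⦄ ⦃M' : Tm Loc Ch⦄,
    EvalN n R M T i → Step M M' → ∃ U, ReflTransGen MemStep T U ∧ EvalN n R M' U i

def MemStepCommutes (Loc Ch : Type) [DecidableEq Loc] (n : ℕ) : Prop :=
  ∀ ⦃R : Mem Loc Ch⦄ ⦃M : Tm Loc Ch⦄ ⦃T : Mem Loc Ch⦄ ⦃i : Ch⦄ ⦃R' : Mem Loc Ch⦄,
    EvalN n R M T i → MemStep R R' → ∃ U, ReflTransGen MemStep T U ∧ EvalN n R' M U i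

section

variable {n : ℕ}

theorem TermStepCommutes.reflTransGen (hc : TermStepCommutes Loc Ch n) {R T : Mem Loc Ch}
    {M M' : Tm Loc Ch} {i : Ch} (hM : ReflTransGen Step M M') (h : EvalN n R M T i) :
    ∃ U, ReflTransGen MemStep T U ∧ EvalN n R M' U i := by
  induction hM generalizing T with
  | refl => exact ⟨T, .refl, h⟩
  | tail _ hstep ih =>
    obtain ⟨T₁, hT₁, h₁⟩ := ih h
    obtain ⟨U, hU, h₂⟩ := hc h₁ hstep
    exact ⟨U, hT₁.trans hU, h₂⟩

theorem MemStepCommutes.reflTransGen (hc : MemStepCommutes Loc Ch n) {R R' T : Mem Loc Ch}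
    {M : Tm Loc Ch} {i : Ch} (hR : ReflTransGen MemStep R R') (h : EvalN n R M T i) :
    ∃ U, ReflTransGen MemStep T U ∧ EvalN n R' M U i := by
  induction hR generalizing T with
  | refl => exact ⟨T, .refl, h⟩
  | tail _ hstep ih =>
    obtain ⟨T₁, hT₁, h₁⟩ := ih h
    obtain ⟨U, hU, h₂⟩ := hc h₁ hstep
    exact ⟨U, hT₁.trans hU, h₂⟩

theorem termStepCommutes_of_forall_lt (hterm : ∀ m < n, TermStepCommutes Loc Ch m)
    (hmem : ∀ m < n, MemStepCommutes Loc Ch m) : TermStepCommutes Loc Ch n := by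
  intro R M T i M' h hstep
  cases hstep with
  | beta => exact ⟨T, .refl, h.beta⟩
  | passage _ _ _ _ hab => exact ⟨T, .refl, h.passage hab⟩
  | select => exact ⟨T, .refl, h.select⟩
  | reject _ _ _ hij => exact ⟨T, .refl, h.reject hij⟩
  | prefixPop => exact ⟨T, .refl, h.prefixPop⟩
  | prefixPush => exact ⟨T, .refl, h.prefixPush⟩
  | assoc => exact ⟨T, .refl, h.assoc⟩
  | unroll => exact ⟨T, .refl, h.unroll⟩
  | push_left _ _ _ _ hN =>
    cases h with | push h =>
    exact (hmem _ (by omega) h (.head _ _ _ _ hN)).imp fun _ ⟨hU, h'⟩ => ⟨hU, h'.push⟩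
  | push_right _ _ _ _ hM =>
    cases h with | push h =>
    exact (hterm _ (by omega) h hM).imp fun _ ⟨hU, h'⟩ => ⟨hU, h'.push⟩
  | pop_body _ _ _ hM =>
    cases h with | pop h =>
    exact (hterm _ (by omega) h (hM.subst 0 _)).imp fun _ ⟨hU, h'⟩ => ⟨hU, h'.pop⟩
  | case_left _ _ _ _ hM =>
    cases h with
    | case_eq h₁ h₂ =>
      obtain ⟨S₁, hS₁, h₁'⟩ := hterm _ (by omega) h₁ hM
      obtain ⟨U, hU, h₂'⟩ := (hmem _ (by omega)).reflTransGen hS₁ h₂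
      exact ⟨U, hU, h₁'.case_eq h₂'⟩
    | case_ne hne h₁ =>
      exact (hterm _ (by omega) h₁ hM).imp fun _ ⟨hU, h₁'⟩ => ⟨hU, h₁'.case_ne hne⟩
  | case_right _ _ _ _ hN =>
    cases h with
    | case_eq h₁ h₂ =>
      exact (hterm _ (by omega) h₂ hN).imp fun _ ⟨hU, h₂'⟩ => ⟨hU, h₁.case_eq h₂'⟩
    | case_ne hne h₁ => exact ⟨T, .refl, h₁.case_ne hne⟩
  | loop_body _ _ _ hM =>
    cases h with
    | loop_eq h₁ h₂ =>
      obtain ⟨S₁, hS₁, h₁'⟩ := hterm _ (by omega) h₁ hM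
      obtain ⟨T₁, hT₁, h₂'⟩ := hterm _ (by omega) h₂ (.loop_body _ _ _ hM)
      obtain ⟨U, hU, h₂''⟩ := (hmem _ (by omega)).reflTransGen hS₁ h₂'
      exact ⟨U, hT₁.trans hU, h₁'.loop_eq h₂''⟩
    | loop_ne hne h₁ =>
      exact (hterm _ (by omega) h₁ hM).imp fun _ ⟨hU, h₁'⟩ => ⟨hU, h₁'.loop_ne hne⟩

theorem memStepCommutes_of_forall_lt (hterm : ∀ m < n, TermStepCommutes Loc Ch m)
    (hmem : ∀ m < n, MemStepCommutes Loc Ch m) : MemStepCommutes Loc Ch n := by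
  intro R M T i R' h hR
  cases h with
  | choice => exact ⟨R', .single hR, .choice _ _ _⟩
  | push h => exact (hmem _ (by omega) h (.tail _ _ _ _ hR)).imp fun _ ⟨hU, h'⟩ => ⟨hU, h'.push⟩
  | pop h =>
    rcases hR.push_inv with ⟨N', hN, rfl⟩ | ⟨S', hS, rfl⟩
    · exact ((hterm _ (by omega)).reflTransGen (Step.subst_arg _ hN 0) h).imp
        fun _ ⟨hU, h'⟩ => ⟨hU, h'.pop⟩
    · exact (hmem _ (by omega) h hS).imp fun _ ⟨hU, h'⟩ => ⟨hU, h'.pop⟩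
  | case_eq h₁ h₂ =>
    obtain ⟨S₁, hS₁, h₁'⟩ := hmem _ (by omega) h₁ hR
    obtain ⟨U, hU, h₂'⟩ := (hmem _ (by omega)).reflTransGen hS₁ h₂
    exact ⟨U, hU, h₁'.case_eq h₂'⟩
  | case_ne hne h₁ =>
    exact (hmem _ (by omega) h₁ hR).imp fun _ ⟨hU, h₁'⟩ => ⟨hU, h₁'.case_ne hne⟩
  | loop_eq h₁ h₂ =>
    obtain ⟨S₁, hS₁, h₁'⟩ := hmem _ (by omega) h₁ hR
    obtain ⟨U, hU, h₂'⟩ := (hmem _ (by omega)).reflTransGen hS₁ h₂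
    exact ⟨U, hU, h₁'.loop_eq h₂'⟩
  | loop_ne hne h₁ =>
    exact (hmem _ (by omega) h₁ hR).imp fun _ ⟨hU, h₁'⟩ => ⟨hU, h₁'.loop_ne hne⟩

theorem termStepCommutes_and_memStepCommutes (n : ℕ) :
    TermStepCommutes Loc Ch n ∧ MemStepCommutes Loc Ch n := by
  induction n using Nat.strong_induction_on with
  | _ n ih =>
    have hterm m hm := (ih m hm).1
    have hmem m hm := (ih m hm).2
    exact ⟨termStepCommutes_of_forall_lt hterm hmem, memStepCommutes_of_forall_lt hterm hmem⟩

end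

/-- Evaluation commutes with reduction. -/
theorem eval_commutes_with_reduction (R S T : Mem Loc Ch) (M N : Tm Loc Ch) (i : Ch)
    (hmem : Relation.ReflTransGen MemStep R S) (hred : Relation.ReflTransGen Step M N)
    (heval : Eval R M T i) :
    ∃ U : Mem Loc Ch, Relation.ReflTransGen MemStep T U ∧ Eval S N U i := by
  obtain ⟨n, h⟩ := eval_iff_exists_evalN.1 heval
  obtain ⟨T₁, hT₁, h₁⟩ := (termStepCommutes_and_memStepCommutes n).1.reflTransGen hred h
  obtain ⟨U, hU, h₂⟩ := (termStepCommutes_and_memStepCommutes n).2.reflTransGen hmem h₁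
  exact ⟨U, hT₁.trans hU, eval_iff_exists_evalN.2 ⟨n, h₂⟩⟩
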